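/- arXiv:1205.1007 — 4 statements merged into one kernel-verified Lean document; each statement's English description precedes it below -/
import Mathlib

section
/- Let $F_0, F_1$ solve $F_0' = (d_0+\nu_{01})F_0 - \nu_{01} F_1$, $F_1' = -\nu_{10} F_0 + \nu_{10} F_1$ on $[0,T]$ with $F_0(T) = F_1(T) = 1$, where $d_0, \nu_{01}, \nu_{10} > 0$, and let $F_2(t) = e^{-d_0(T-t)}$. Then for all $t \in [0,T)$, $F_1(t) > F_0(t) > F_2(t)$. -/
/-!
Put `G = F₁ - F₀` and `H = F₀ - F₂`. Both vanish at `T` and solve linear equations with sources,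
`G' = (ν₀₁ + ν₁₀) G - d₀ F₀` and `H' = d₀ H - ν₀₁ G`. Solving `f' = λ f - g` backwards from
`f(T) = 0` with `g > 0` gives `f > 0`, since `(e^{-λt} f)' = -e^{-λt} g < 0`. So wherever
`F₀ > 0` up to `T` we get `G > 0`, hence `H > 0`, i.e. `F₀ > F₂ > 0`. At the last zero of `F₀`
in `[0, T]` this would give `F₀ > 0`, so there is none and the argument runs on all of `[0, T)`.
-/

open Set

theorem pos_of_hasDerivAt_mul_sub_of_eq_zero_right {f g : ℝ → ℝ} {l a b : ℝ}
    (hf : ContinuousOn f (Icc a b)) (hf' : ∀ x ∈ Ioo a b, HasDerivAt f (l * f x - g x) x)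
    (hg : ∀ x ∈ Ioo a b, 0 < g x) (hb : f b = 0) : ∀ x ∈ Ico a b, 0 < f x := by
  set φ : ℝ → ℝ := fun x => Real.exp (-l * x) * f x
  have hφ' : ∀ x ∈ Ioo a b, HasDerivAt φ (-(Real.exp (-l * x) * g x)) x := by
    intro x hx
    have hexp : HasDerivAt (fun y => Real.exp (-l * y)) (Real.exp (-l * x) * -l) x := by
      simpa using ((hasDerivAt_id x).const_mul (-l)).exp
    exact (hexp.mul (hf' x hx)).congr_deriv (by ring)
  have hφ : StrictAntiOn φ (Icc a b) := by
    refine strictAntiOn_of_deriv_neg (convex_Icc a b)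
      ((Real.continuous_exp.comp (continuous_const.mul continuous_id)).continuousOn.mul hf) ?_
    rw [interior_Icc]
    intro x hx
    rw [(hφ' x hx).deriv, neg_lt_zero]
    exact mul_pos (Real.exp_pos _) (hg x hx)
  intro x hx
  have hφx : φ b < φ x := hφ ⟨hx.1, hx.2.le⟩ ⟨hx.1.trans hx.2.le, le_rfl⟩ hx.2
  simp only [φ, hb, mul_zero] at hφx
  exact pos_of_mul_pos_right hφx (Real.exp_pos _).le

theorem hasDerivAt_exp_neg_mul_sub (d T t : ℝ) :
    HasDerivAt (fun s => Real.exp (-d * (T - s))) (d * Real.exp (-d * (T - t))) t := by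
  simpa [mul_comm] using (((hasDerivAt_id t).const_sub T).const_mul (-d)).exp

theorem exp_lt_F0_lt_F1_of_F0_pos {d0 ν01 ν10 a T : ℝ} {F0 F1 : ℝ → ℝ}
    (hd0 : 0 < d0) (h01 : 0 < ν01)
    (hODE0 : ∀ t ∈ Icc a T, HasDerivAt F0 ((d0 + ν01) * F0 t - ν01 * F1 t) t)
    (hODE1 : ∀ t ∈ Icc a T, HasDerivAt F1 (-ν10 * F0 t + ν10 * F1 t) t)
    (hterm0 : F0 T = 1) (hterm1 : F1 T = 1) (hF0 : ∀ t ∈ Ioo a T, 0 < F0 t) :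
    ∀ t ∈ Ico a T, F0 t < F1 t ∧ Real.exp (-d0 * (T - t)) < F0 t := by
  have hcont0 : ContinuousOn F0 (Icc a T) := fun t ht =>
    (hODE0 t ht).continuousAt.continuousWithinAt
  have hcont1 : ContinuousOn F1 (Icc a T) := fun t ht =>
    (hODE1 t ht).continuousAt.continuousWithinAt
  have hG : ∀ t ∈ Ico a T, 0 < F1 t - F0 t := by
    refine pos_of_hasDerivAt_mul_sub_of_eq_zero_right (l := ν01 + ν10) (g := fun t => d0 * F0 t)
      (hcont1.sub hcont0) (fun t ht => ?_) (fun t ht => mul_pos hd0 (hF0 t ht))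
      (by rw [hterm0, hterm1, sub_self])
    exact ((hODE1 t (Ioo_subset_Icc_self ht)).sub (hODE0 t (Ioo_subset_Icc_self ht))).congr_deriv
      (by ring)
  have hH : ∀ t ∈ Ico a T, 0 < F0 t - Real.exp (-d0 * (T - t)) := by
    refine pos_of_hasDerivAt_mul_sub_of_eq_zero_right (l := d0)
      (g := fun t => ν01 * (F1 t - F0 t))
      (hcont0.sub (by fun_prop)) (fun t ht => ?_)
      (fun t ht => mul_pos h01 (hG t (Ioo_subset_Ico_self ht)))
      (by rw [hterm0, sub_self, mul_zero, Real.exp_zero, sub_self])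
    exact ((hODE0 t (Ioo_subset_Icc_self ht)).sub (hasDerivAt_exp_neg_mul_sub d0 T t)).congr_deriv
      (by ring)
  exact fun t ht => ⟨sub_pos.1 (hG t ht), sub_pos.1 (hH t ht)⟩

theorem stmt2_general (d0 ν01 ν10 T : ℝ)
    (hd0 : 0 < d0) (h01 : 0 < ν01)
    (F0 F1 : ℝ → ℝ)
    (hODE0 : ∀ t ∈ Set.Icc (0:ℝ) T, HasDerivAt F0 ((d0 + ν01) * F0 t - ν01 * F1 t) t)
    (hODE1 : ∀ t ∈ Set.Icc (0:ℝ) T, HasDerivAt F1 (-ν10 * F0 t + ν10 * F1 t) t)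
    (hterm0 : F0 T = 1) (hterm1 : F1 T = 1) :
    ∀ t ∈ Set.Ico (0:ℝ) T, F1 t > F0 t ∧ F0 t > Real.exp (-d0 * (T - t)) := by
  have hF0 : ∀ t ∈ Icc 0 T, 0 < F0 t := by
    by_contra! ⟨t₀, ht₀, hF0t₀⟩
    have hcont : ContinuousOn F0 (Icc 0 T) := fun t ht =>
      (hODE0 t ht).continuousAt.continuousWithinAt
    obtain ⟨c, ⟨hc, hF0c⟩, hlast⟩ :=
      (isCompact_Icc.of_isClosed_subset (hcont.preimage_isClosed_of_isClosed isClosed_Icc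
        isClosed_Iic) inter_subset_left).exists_isGreatest ⟨t₀, ht₀, hF0t₀⟩
    have hcT : c < T := hc.2.lt_of_ne (by rintro rfl; norm_num [hterm0] at hF0c)
    have hsub : Icc c T ⊆ Icc 0 T := Icc_subset_Icc_left hc.1
    have hpos : ∀ t ∈ Ioo c T, 0 < F0 t := fun t ht =>
      not_le.1 fun h => (hlast ⟨⟨hc.1.trans ht.1.le, ht.2.le⟩, h⟩).not_gt ht.1
    have := (exp_lt_F0_lt_F1_of_F0_pos hd0 h01 (fun t ht => hODE0 t (hsub ht))
      (fun t ht => hODE1 t (hsub ht)) hterm0 hterm1 hpos c ⟨le_rfl, hcT⟩).2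
    linarith [Real.exp_pos (-d0 * (T - c)), show F0 c ≤ 0 from hF0c]
  exact exp_lt_F0_lt_F1_of_F0_pos hd0 h01 hODE0 hODE1 hterm0 hterm1
    fun t ht => hF0 t (Ioo_subset_Icc_self ht)

theorem stmt2 (d0 ν01 ν10 T : ℝ)
    (hd0 : 0 < d0) (h01 : 0 < ν01) (h10 : 0 < ν10) (hT : 0 < T)
    (F0 F1 : ℝ → ℝ)
    (hODE0 : ∀ t ∈ Set.Icc (0:ℝ) T, HasDerivAt F0 ((d0 + ν01) * F0 t - ν01 * F1 t) t)
    (hODE1 : ∀ t ∈ Set.Icc (0:ℝ) T, HasDerivAt F1 (-ν10 * F0 t + ν10 * F1 t) t)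
    (hterm0 : F0 T = 1) (hterm1 : F1 T = 1) :
    ∀ t ∈ Set.Ico (0:ℝ) T, F1 t > F0 t ∧ F0 t > Real.exp (-d0 * (T - t)) :=
  stmt2_general d0 ν01 ν10 T hd0 h01 F0 F1 hODE0 hODE1 hterm0 hterm1
end

section
/- With $F_0, F_1$ as above and entropy-adjusted intensities $\hat\nu_{01}(t) = \nu_{01} F_1(t)/F_0(t)$ and $\hat\nu_{10}(t) = \nu_{10} F_0(t)/F_1(t)$, one has $\hat\nu_{01}(t) > \nu_{01}$ and $\hat\nu_{10}(t) < \nu_{10}$ for all $t \in [0,T)$. -/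
/-! The difference `G = F₁ - F₀` solves `G' = (ν₀₁ + ν₁₀) G - d₀ F₀` with `G(T) = 0`.
Since `d₀ F₀ > 0`, the integrating factor makes `e^{-(ν₀₁ + ν₁₀) t} G(t)` strictly decreasing,
so it is positive before `T`, i.e. `F₀ < F₁` on `[0, T)`. -/

open Set Real

lemma strictAntiOn_exp_mul_of_hasDerivAt_sub {G f : ℝ → ℝ} {c a b : ℝ}
    (hG : ∀ s ∈ Icc a b, HasDerivAt G (c * G s - f s) s) (hf : ∀ s ∈ Ioo a b, 0 < f s) :
    StrictAntiOn (fun s => exp (-c * s) * G s) (Icc a b) := by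
  have hH : ∀ s ∈ Icc a b,
      HasDerivAt (fun s => exp (-c * s) * G s) (-(exp (-c * s) * f s)) s :=
    fun s hs => ((((hasDerivAt_id' s).const_mul (-c)).exp).mul (hG s hs)).congr_deriv (by ring)
  refine strictAntiOn_of_deriv_neg (convex_Icc a b)
    (fun s hs => (hH s hs).continuousAt.continuousWithinAt) fun s hs => ?_
  rw [interior_Icc] at hs
  rw [(hH s (Ioo_subset_Icc_self hs)).deriv, neg_lt_zero]
  exact mul_pos (exp_pos _) (hf s hs)

lemma pos_of_hasDerivAt_sub_of_eq_zero {G f : ℝ → ℝ} {c a b : ℝ}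
    (hG : ∀ s ∈ Icc a b, HasDerivAt G (c * G s - f s) s) (hf : ∀ s ∈ Ioo a b, 0 < f s)
    (hb : G b = 0) : ∀ t ∈ Ico a b, 0 < G t := by
  intro t ht
  have hdecr := strictAntiOn_exp_mul_of_hasDerivAt_sub hG hf (Ico_subset_Icc_self ht)
    (right_mem_Icc.mpr (ht.1.trans ht.2.le)) ht.2
  simp only [hb, mul_zero] at hdecr
  exact pos_of_mul_pos_right hdecr (exp_pos _).le

theorem stmt3_general (d0 ν01 ν10 T : ℝ)
    (hd0 : 0 < d0) (h01 : 0 < ν01) (h10 : 0 < ν10)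
    (F0 F1 : ℝ → ℝ)
    (hpos0 : ∀ t ∈ Set.Icc (0:ℝ) T, 0 < F0 t)
    (hpos1 : ∀ t ∈ Set.Icc (0:ℝ) T, 0 < F1 t)
    (hODE0 : ∀ t ∈ Set.Icc (0:ℝ) T, HasDerivAt F0 ((d0 + ν01) * F0 t - ν01 * F1 t) t)
    (hODE1 : ∀ t ∈ Set.Icc (0:ℝ) T, HasDerivAt F1 (-ν10 * F0 t + ν10 * F1 t) t)
    (hterm0 : F0 T = 1) (hterm1 : F1 T = 1) :
    ∀ t ∈ Set.Ico (0:ℝ) T,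
      ν01 * F1 t / F0 t > ν01 ∧ ν10 * F0 t / F1 t < ν10 := by
  have hdiff : ∀ s ∈ Icc (0:ℝ) T,
      HasDerivAt (fun x => F1 x - F0 x) ((ν01 + ν10) * (F1 s - F0 s) - d0 * F0 s) s :=
    fun s hs => ((hODE1 s hs).sub (hODE0 s hs)).congr_deriv (by ring)
  have hlt : ∀ t ∈ Ico (0:ℝ) T, 0 < F1 t - F0 t :=
    pos_of_hasDerivAt_sub_of_eq_zero hdiff
      (fun s hs => mul_pos hd0 (hpos0 s (Ioo_subset_Icc_self hs)))
      (by simp [hterm0, hterm1])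
  intro t ht
  have hF0 := hpos0 t (Ico_subset_Icc_self ht)
  have hF1 := hpos1 t (Ico_subset_Icc_self ht)
  have hF : F0 t < F1 t := sub_pos.mp (hlt t ht)
  constructor
  · rw [gt_iff_lt, lt_div_iff₀ hF0]
    exact mul_lt_mul_of_pos_left hF h01
  · rw [div_lt_iff₀ hF1]
    exact mul_lt_mul_of_pos_left hF h10

theorem stmt3 (d0 ν01 ν10 T : ℝ)
    (hd0 : 0 < d0) (h01 : 0 < ν01) (h10 : 0 < ν10) (hT : 0 < T)
    (F0 F1 : ℝ → ℝ)
    (hpos0 : ∀ t ∈ Set.Icc (0:ℝ) T, 0 < F0 t)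
    (hpos1 : ∀ t ∈ Set.Icc (0:ℝ) T, 0 < F1 t)
    (hODE0 : ∀ t ∈ Set.Icc (0:ℝ) T, HasDerivAt F0 ((d0 + ν01) * F0 t - ν01 * F1 t) t)
    (hODE1 : ∀ t ∈ Set.Icc (0:ℝ) T, HasDerivAt F1 (-ν10 * F0 t + ν10 * F1 t) t)
    (hterm0 : F0 T = 1) (hterm1 : F1 T = 1) :
    ∀ t ∈ Set.Ico (0:ℝ) T,
      ν01 * F1 t / F0 t > ν01 ∧ ν10 * F0 t / F1 t < ν10 :=
  stmt3_general d0 ν01 ν10 T hd0 h01 h10 F0 F1 hpos0 hpos1 hODE0 hODE1 hterm0 hterm1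
end

section
/- Define for $T \ge 0$ and $\nu_{01}, \nu_{10} > 0$ the adjusted times-to-maturity $\tilde T^0(T) = \frac{1}{(\nu_{01}+\nu_{10})^2}\big[\nu_{01} + \nu_{10}(\nu_{01}+\nu_{10})T - \nu_{01} e^{-(\nu_{01}+\nu_{10})T}\big]$ and $\tilde T^1(T) = \frac{1}{(\nu_{01}+\nu_{10})^2}\big[-\nu_{10} + \nu_{10}(\nu_{01}+\nu_{10})T + \nu_{10} e^{-(\nu_{01}+\nu_{10})T}\big]$. Then for all $T > 0$, $0 < \tilde T^1(T) < \tilde T^0(T) < T$. -/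
theorem stmt5 (ν01 ν10 : ℝ) (h01 : 0 < ν01) (h10 : 0 < ν10)
    (T0 T1 : ℝ → ℝ)
    (hT0 : T0 = fun T => (1 / (ν01 + ν10)^2) *
      (ν01 + ν10 * (ν01 + ν10) * T - ν01 * Real.exp (-(ν01 + ν10) * T)))
    (hT1 : T1 = fun T => (1 / (ν01 + ν10)^2) *
      (-ν10 + ν10 * (ν01 + ν10) * T + ν10 * Real.exp (-(ν01 + ν10) * T))) :
    ∀ T : ℝ, 0 < T → 0 < T1 T ∧ T1 T < T0 T ∧ T0 T < T := by
  intro T hT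
  subst hT0 hT1
  simp only
  set s := ν01 + ν10 with hs
  have hspos : 0 < s := by positivity
  have hs2 : 0 < s ^ 2 := by positivity
  have hx : 0 < s * T := by positivity
  set e := Real.exp (-s * T) with he
  have hepos : 0 < e := Real.exp_pos _
  have he1 : e < 1 := by
    rw [he]
    exact Real.exp_lt_one_iff.mpr (by nlinarith)
  have hkey : 0 < s * T - 1 + e := by
    have := Real.add_one_lt_exp (x := -(s * T)) (by nlinarith)
    rw [he]
    have : -(s*T) + 1 < Real.exp (-(s*T)) := by linarith
    rw [show -s * T = -(s*T) by ring]
    linarith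
  have hinv : 0 < 1 / s ^ 2 := by positivity
  refine ⟨?_, ?_, ?_⟩
  · have : 0 < -ν10 + ν10 * s * T + ν10 * e := by nlinarith
    positivity
  · rw [mul_lt_mul_iff_right₀ hinv]
    nlinarith
  · rw [div_mul_eq_mul_div, one_mul, div_lt_iff₀ hs2]
    nlinarith [mul_pos h01 hkey, sq_nonneg s]
end

section
/- In the three-state single-shock model, for all $t \in [0,T)$ one has $\check F_0(t) < \check F_1(t)$ and $\check F_2(t) < \check F_1(t)$. -/
theorem stmt8 (d0 ν01 ν10 T : ℝ)
    (hd0 : 0 < d0) (h01 : 0 < ν01) (h10 : 0 < ν10) (hT : 0 < T)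
    (hne1 : d0 ≠ ν10) (hne2 : d0 + ν01 ≠ ν10)
    (F0 F1 F2 : ℝ → ℝ)
    (hF2 : F2 = fun t => Real.exp (-d0 * (T - t)))
    (hF1 : F1 = fun t => F2 t *
      (d0 / (d0 - ν10) * Real.exp ((d0 - ν10) * (T - t)) - ν10 / (d0 - ν10)))
    (hF0 : F0 = fun t => F1 t + d0 / (d0 + ν01 - ν10) *
      (Real.exp (-(d0 + ν01) * (T - t)) - Real.exp (-ν10 * (T - t)))) :
    ∀ t ∈ Set.Ico (0:ℝ) T, F0 t < F1 t ∧ F2 t < F1 t := by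
  subst hF2 hF1 hF0
  intro t ht
  obtain ⟨ht0, htT⟩ := ht
  have hs : 0 < T - t := by linarith
  constructor
  · simp only
    have h : d0 / (d0 + ν01 - ν10) *
        (Real.exp (-(d0 + ν01) * (T - t)) - Real.exp (-ν10 * (T - t))) < 0 := by
      rcases (sub_ne_zero.mpr hne2).lt_or_gt with hc | hc
      · have hexp : Real.exp (-ν10 * (T - t)) < Real.exp (-(d0 + ν01) * (T - t)) := by
          apply Real.exp_lt_exp.mpr; nlinarith
        have hcoef : d0 / (d0 + ν01 - ν10) < 0 := div_neg_of_pos_of_neg hd0 hc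
        nlinarith
      · have hexp : Real.exp (-(d0 + ν01) * (T - t)) < Real.exp (-ν10 * (T - t)) := by
          apply Real.exp_lt_exp.mpr; nlinarith
        have hcoef : 0 < d0 / (d0 + ν01 - ν10) := div_pos hd0 hc
        nlinarith
    linarith
  · simp only
    have hE : 0 < Real.exp (-d0 * (T - t)) := Real.exp_pos _
    have h1 : (1:ℝ) <
        d0 / (d0 - ν10) * Real.exp ((d0 - ν10) * (T - t)) - ν10 / (d0 - ν10) := by
      rcases (sub_ne_zero.mpr hne1).lt_or_gt with hc | hc
      · have hx : (d0 - ν10) * (T - t) < 0 := mul_neg_of_neg_of_pos hc hs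
        have hexp : Real.exp ((d0 - ν10) * (T - t)) < 1 := by
          rw [show (1:ℝ) = Real.exp 0 by simp]; exact Real.exp_lt_exp.mpr hx
        rw [div_mul_eq_mul_div, ← sub_div, lt_div_iff_of_neg hc]
        nlinarith
      · have hx : 0 < (d0 - ν10) * (T - t) := mul_pos hc hs
        have hexp : 1 < Real.exp ((d0 - ν10) * (T - t)) := by
          rw [show (1:ℝ) = Real.exp 0 by simp]; exact Real.exp_lt_exp.mpr hx
        rw [div_mul_eq_mul_div, ← sub_div, lt_div_iff₀ hc]
        nlinarith
    nlinarith
end
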